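/- The function E : (V → ℝ) → ℝ is convex on all of ℝ^V and continuously differentiable on all of ℝ^V. -/

import Mathlib

open Real Finset

/-- Milnor's Lobachevsky function. -/
noncomputable def Lob (x : ℝ) : ℝ := -∫ t in (0:ℝ)..x, Real.log |2 * Real.sin t|

/-- Angle opposite the side of length `a` in a euclidean triangle with side
lengths `a`, `b`, `c`, given by the arccos formula (which, since `Real.arccos`
clamps, also implements the broken-triangle convention). -/
noncomputable def eang (a b c : ℝ) : ℝ := Real.arccos ((b^2 + c^2 - a^2) / (2*b*c))

/-- The extended triangle function `f`. -/
noncomputable def fTri (p : ℝ × ℝ × ℝ) : ℝ :=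
  eang (Real.exp p.1) (Real.exp p.2.1) (Real.exp p.2.2) * p.1 +
  eang (Real.exp p.2.1) (Real.exp p.2.2) (Real.exp p.1) * p.2.1 +
  eang (Real.exp p.2.2) (Real.exp p.1) (Real.exp p.2.1) * p.2.2 +
  Lob (eang (Real.exp p.1) (Real.exp p.2.1) (Real.exp p.2.2)) +
  Lob (eang (Real.exp p.2.1) (Real.exp p.2.2) (Real.exp p.1)) +
  Lob (eang (Real.exp p.2.2) (Real.exp p.1) (Real.exp p.2.1))

/-- The modified logarithmic lengths `λ̃_{ij} = λ_{ij} + u_i + u_j`. -/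
def lamT {V : Type*} (lam : V → V → ℝ) (u : V → ℝ) (i j : V) : ℝ :=
  lam i j + u i + u j

/-- The modified lengths `ℓ̃_{ij} = e^{λ̃_{ij}/2}`. -/
noncomputable def ellT {V : Type*} (lam : V → V → ℝ) (u : V → ℝ) (i j : V) : ℝ :=
  Real.exp (lamT lam u i j / 2)

/-- The angle at the vertex `i` in the euclidean triangle `ijk` with side
lengths `ℓ̃_{ij}, ℓ̃_{jk}, ℓ̃_{ki}` (extended by the broken-triangle convention). -/
noncomputable def angAt {V : Type*} (lam : V → V → ℝ) (u : V → ℝ) (i j k : V) : ℝ :=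
  eang (ellT lam u j k) (ellT lam u k i) (ellT lam u i j)

/-- The function `E_{T,Θ,λ}(u)` of the first variational principle. -/
noncomputable def Efun {V T : Type*} [Fintype V] [Fintype T]
    (tv : T → V × V × V) (lam : V → V → ℝ) (Θ : V → ℝ) (u : V → ℝ) : ℝ :=
  (∑ t : T,
    (2 * fTri (lamT lam u (tv t).1 (tv t).2.1 / 2,
               lamT lam u (tv t).2.1 (tv t).2.2 / 2,
               lamT lam u (tv t).2.2 (tv t).1 / 2)
      - (π/2) * (lamT lam u (tv t).1 (tv t).2.1
               + lamT lam u (tv t).2.1 (tv t).2.2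
               + lamT lam u (tv t).2.2 (tv t).1)))
  + ∑ i : V, Θ i * u i

namespace BPS

open MeasureTheory intervalIntegral Topology


noncomputable def lsin (t : ℝ) : ℝ := Real.log |2 * Real.sin t|

lemma measurable_lsin : Measurable lsin :=
  Real.measurable_log.comp ((continuous_abs.comp (continuous_const.mul Real.continuous_sin)).measurable)

lemma sin_lower {t : ℝ} (h1 : 0 < t) (h2 : t < π) :
    2 * t * (π - t) / π ^ 2 ≤ Real.sin t := by
  have hπ : 0 < π := Real.pi_pos
  rcases le_total t (π / 2) with h | h
  · have hb : 2 / π * t ≤ Real.sin t := Real.mul_le_sin h1.le h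
    have he : 2 / π * t = 2 * t * π / π ^ 2 := by field_simp
    have : 2 * t * (π - t) / π ^ 2 ≤ 2 * t * π / π ^ 2 := by
      apply div_le_div_of_nonneg_right ?_ (by positivity) |>.trans_eq rfl
      nlinarith
    rw [he] at hb; linarith
  · have h1' : 0 < π - t := by linarith
    have hb : 2 / π * (π - t) ≤ Real.sin (π - t) := Real.mul_le_sin h1'.le (by linarith)
    rw [Real.sin_pi_sub] at hb
    have he : 2 / π * (π - t) = 2 * π * (π - t) / π ^ 2 := by field_simp
    have : 2 * t * (π - t) / π ^ 2 ≤ 2 * π * (π - t) / π ^ 2 := by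
      apply div_le_div_of_nonneg_right ?_ (by positivity) |>.trans_eq rfl
      nlinarith
    rw [he] at hb; linarith

lemma neg_log_le {x : ℝ} (hx : 0 < x) : -Real.log x ≤ 2 / Real.sqrt x := by
  have h1 : Real.log (Real.sqrt x)⁻¹ ≤ (Real.sqrt x)⁻¹ - 1 :=
    Real.log_le_sub_one_of_pos (by positivity)
  have h2 : Real.log (Real.sqrt x)⁻¹ = -(Real.log x / 2) := by
    rw [Real.log_inv, Real.log_sqrt hx.le]
  have h3 : (0:ℝ) < Real.sqrt x := Real.sqrt_pos.2 hx
  rw [h2] at h1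
  have : -(Real.log x) / 2 ≤ (Real.sqrt x)⁻¹ := by linarith
  rw [div_le_iff₀ (by norm_num : (0:ℝ) < 2)] at this
  rw [inv_mul_eq_div] at this
  linarith [this]

lemma lsin_bound {t : ℝ} (h1 : 0 < t) (h2 : t < π) :
    |lsin t| ≤ Real.log 2 + 2 * Real.log π + 2 / Real.sqrt t + 2 / Real.sqrt (π - t) := by
  have hπ : 0 < π := Real.pi_pos
  have hpt : 0 < π - t := by linarith
  have hs : 0 < Real.sin t := Real.sin_pos_of_pos_of_lt_pi h1 h2
  have hub : lsin t ≤ Real.log 2 := by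
    apply Real.log_le_log (by positivity)
    rw [abs_of_pos (by positivity)]
    nlinarith [Real.sin_le_one t]
  have hlb : -(Real.log 2 + 2 * Real.log π + 2 / Real.sqrt t + 2 / Real.sqrt (π - t)) ≤ lsin t := by
    have hlow := sin_lower h1 h2
    have key : Real.log (2 * (2 * t * (π - t) / π ^ 2)) ≤ lsin t := by
      unfold lsin
      rw [abs_of_pos (by positivity)]
      apply Real.log_le_log (by positivity)
      nlinarith
    have hexp : Real.log (2 * (2 * t * (π - t) / π ^ 2))
        = Real.log 2 + Real.log 2 + Real.log t + Real.log (π - t) - 2 * Real.log π := by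
      rw [show 2 * (2 * t * (π - t) / π ^ 2) = 2 * 2 * t * (π - t) / π^2 by ring]
      rw [Real.log_div (by positivity) (by positivity),
        Real.log_mul (by positivity) (by positivity),
        Real.log_mul (by positivity) h1.ne',
        Real.log_mul (by norm_num) (by norm_num), Real.log_pow]
      push_cast; ring
    have hlt : -(2 / Real.sqrt t) ≤ Real.log t := by have := neg_log_le h1; linarith
    have hlpt : -(2 / Real.sqrt (π - t)) ≤ Real.log (π - t) := by
      have := neg_log_le hpt; linarith
    have hl2 : (0:ℝ) ≤ Real.log 2 := Real.log_nonneg (by norm_num)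
    nlinarith [key]
  rw [abs_le]
  refine ⟨by linarith, ?_⟩
  have h2' : (0:ℝ) ≤ 2 / Real.sqrt t := by positivity
  have h3' : (0:ℝ) ≤ 2 / Real.sqrt (π - t) := by positivity
  have hl2 : (0:ℝ) ≤ Real.log π := Real.log_nonneg (by linarith [Real.pi_gt_three])
  linarith

lemma integrable_invsqrt : IntegrableOn (fun t : ℝ => 2 / Real.sqrt t) (Set.Ioc 0 π) := by
  have h : IntervalIntegrable (fun x : ℝ => x ^ (-1/2 : ℝ)) volume 0 π :=
    intervalIntegral.intervalIntegrable_rpow' (by norm_num)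
  have h' : IntegrableOn (fun x : ℝ => x ^ (-1/2 : ℝ)) (Set.Ioc 0 π) :=
    (intervalIntegrable_iff_integrableOn_Ioc_of_le Real.pi_pos.le).1 h
  refine IntegrableOn.congr_fun (h'.const_mul 2) (fun x hx => ?_) measurableSet_Ioc
  have hx0 : (0:ℝ) < x := hx.1
  have hr : (x:ℝ) ^ (-1/2 : ℝ) = (x ^ (1/2 : ℝ))⁻¹ := by
    rw [show (-1/2:ℝ) = -(1/2) by norm_num, Real.rpow_neg hx0.le]
  rw [Real.sqrt_eq_rpow, hr]
  ring

lemma integrable_invsqrt' : IntegrableOn (fun t : ℝ => 2 / Real.sqrt (π - t)) (Set.Ioc 0 π) := by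
  have h : IntervalIntegrable (fun t : ℝ => 2 / Real.sqrt t) volume 0 π :=
    (intervalIntegrable_iff_integrableOn_Ioc_of_le Real.pi_pos.le).2 integrable_invsqrt
  have h2 := (h.comp_sub_left π)
  simp only [sub_zero, sub_self] at h2
  have h3 : IntervalIntegrable (fun t : ℝ => 2 / Real.sqrt (π - t)) volume 0 π := h2.symm
  exact (intervalIntegrable_iff_integrableOn_Ioc_of_le Real.pi_pos.le).1 h3

lemma integrableOn_lsin : IntegrableOn lsin (Set.Ioc 0 π) := by
  have hmaj : IntegrableOn (fun t : ℝ =>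
      Real.log 2 + 2 * Real.log π + 2 / Real.sqrt t + 2 / Real.sqrt (π - t)) (Set.Ioc 0 π) := by
    apply (((integrableOn_const measure_Ioc_lt_top.ne).add integrable_invsqrt).add
      integrable_invsqrt')
  refine hmaj.integrable.mono' measurable_lsin.aestronglyMeasurable ?_
  filter_upwards [self_mem_ae_restrict measurableSet_Ioc] with t ht
  rcases lt_or_eq_of_le ht.2 with hlt | heq
  · exact lsin_bound ht.1 hlt
  · have : lsin t = 0 := by rw [heq]; simp [lsin]
    rw [this]
    have hl2 : (0:ℝ) ≤ Real.log 2 := Real.log_nonneg (by norm_num)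
    have hlp : (0:ℝ) ≤ Real.log π := Real.log_nonneg (by linarith [Real.pi_gt_three])
    have i1 : (0:ℝ) ≤ 2 / Real.sqrt t := by positivity
    have i2 : (0:ℝ) ≤ 2 / Real.sqrt (π - t) := by positivity
    simp only [norm_zero]
    linarith

lemma intervalIntegrable_lsin {x y : ℝ} (hx : x ∈ Set.Icc 0 π) (hy : y ∈ Set.Icc 0 π) :
    IntervalIntegrable lsin volume x y := by
  have h : IntervalIntegrable lsin volume 0 π :=
    (intervalIntegrable_iff_integrableOn_Ioc_of_le Real.pi_pos.le).2 integrableOn_lsin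
  exact h.mono_set (by
    rw [Set.uIcc_subset_uIcc_iff_mem]
    constructor
    · rw [Set.uIcc_of_le Real.pi_pos.le]; exact hx
    · rw [Set.uIcc_of_le Real.pi_pos.le]; exact hy)

lemma Lob_zero : Lob 0 = 0 := by simp [Lob]

lemma continuousOn_Lob : ContinuousOn Lob (Set.Icc 0 π) := by
  have h : IntegrableOn lsin (Set.uIcc 0 π) := by
    rw [Set.uIcc_of_le Real.pi_pos.le, integrableOn_Icc_iff_integrableOn_Ioc]
    exact integrableOn_lsin
  have := (intervalIntegral.continuousOn_primitive_interval (a := 0) (b := π) (f := lsin) h)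
  rw [Set.uIcc_of_le Real.pi_pos.le] at this
  exact this.neg

lemma hasDerivAt_Lob {θ : ℝ} (h : θ ∈ Set.Ioo 0 π) :
    HasDerivAt Lob (-Real.log (2 * Real.sin θ)) θ := by
  have hs : 0 < Real.sin θ := Real.sin_pos_of_pos_of_lt_pi h.1 h.2
  have hcont : ContinuousAt lsin θ := by
    have h1 : ContinuousAt (fun t : ℝ => |2 * Real.sin t|) θ :=
      (continuous_abs.comp (continuous_const.mul Real.continuous_sin)).continuousAt
    have h2 : |2 * Real.sin θ| ≠ 0 := by positivity
    exact ContinuousAt.comp (x := θ) (f := fun t : ℝ => |2 * Real.sin t|)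
      (g := Real.log) (Real.continuousAt_log h2) h1
  have hint : IntervalIntegrable lsin volume 0 θ :=
    intervalIntegrable_lsin (by simp [Real.pi_pos.le]) ⟨h.1.le, h.2.le⟩
  have hd := (intervalIntegral.integral_hasDerivAt_right hint
    measurable_lsin.aestronglyMeasurable.stronglyMeasurableAtFilter hcont).neg
  have : lsin θ = Real.log (2 * Real.sin θ) := by
    unfold lsin; rw [abs_of_pos (by positivity)]
  rw [this] at hd
  exact hd


abbrev P3 := ℝ × ℝ × ℝ

noncomputable def pr1 : P3 →L[ℝ] ℝ := ContinuousLinearMap.fst ℝ ℝ (ℝ × ℝ)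
noncomputable def pr2 : P3 →L[ℝ] ℝ :=
  (ContinuousLinearMap.fst ℝ ℝ ℝ).comp (ContinuousLinearMap.snd ℝ ℝ (ℝ × ℝ))
noncomputable def pr3 : P3 →L[ℝ] ℝ :=
  (ContinuousLinearMap.snd ℝ ℝ ℝ).comp (ContinuousLinearMap.snd ℝ ℝ (ℝ × ℝ))

@[simp] lemma pr1_apply (v : P3) : pr1 v = v.1 := rfl
@[simp] lemma pr2_apply (v : P3) : pr2 v = v.2.1 := rfl
@[simp] lemma pr3_apply (v : P3) : pr3 v = v.2.2 := rfl

noncomputable def dotCLM (g : P3) : P3 →L[ℝ] ℝ := g.1 • pr1 + g.2.1 • pr2 + g.2.2 • pr3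

@[simp] lemma dotCLM_apply (g v : P3) :
    dotCLM g v = g.1 * v.1 + g.2.1 * v.2.1 + g.2.2 * v.2.2 := by
  simp [dotCLM]

noncomputable def cycCLM : P3 →L[ℝ] P3 := pr2.prod (pr3.prod pr1)

@[simp] lemma cycCLM_apply (v : P3) : cycCLM v = (v.2.1, v.2.2, v.1) := rfl

noncomputable def ang1 (p : P3) : ℝ := eang (Real.exp p.1) (Real.exp p.2.1) (Real.exp p.2.2)

noncomputable def Gfun (p : P3) : P3 := (ang1 p, ang1 (cycCLM p), ang1 (cycCLM (cycCLM p)))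

lemma fTri_eq (p : P3) : fTri p =
    ang1 p * p.1 + ang1 (cycCLM p) * p.2.1 + ang1 (cycCLM (cycCLM p)) * p.2.2 +
    Lob (ang1 p) + Lob (ang1 (cycCLM p)) + Lob (ang1 (cycCLM (cycCLM p))) := rfl

/-- The strict triangle inequality region. -/
def Δ (p : P3) : Prop :=
  Real.exp p.1 < Real.exp p.2.1 + Real.exp p.2.2 ∧
  Real.exp p.2.1 < Real.exp p.2.2 + Real.exp p.1 ∧
  Real.exp p.2.2 < Real.exp p.1 + Real.exp p.2.1

lemma Δ_cyc {p : P3} (h : Δ p) : Δ (cycCLM p) := by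
  simp only [Δ, cycCLM_apply] at *
  tauto

noncomputable def Qv (a b c : ℝ) : ℝ := 4*b^2*c^2 - (b^2+c^2-a^2)^2

noncomputable def Qp (p : P3) : ℝ := Qv (Real.exp p.1) (Real.exp p.2.1) (Real.exp p.2.2)

lemma Qp_cyc (p : P3) : Qp (cycCLM p) = Qp p := by
  simp only [Qp, Qv, cycCLM_apply]
  ring

lemma Qp_pos {p : P3} (h : Δ p) : 0 < Qp p := by
  obtain ⟨h1, h2, h3⟩ := h
  have ha := Real.exp_pos p.1
  have hb := Real.exp_pos p.2.1
  have hc := Real.exp_pos p.2.2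
  set a := Real.exp p.1
  set b := Real.exp p.2.1
  set c := Real.exp p.2.2
  have key : Qp p = ((b+c)-a)*((b+c)+a)*((a-(b-c))*(a+(b-c))) := by
    simp only [Qp, Qv]; ring
  rw [key]
  have : 0 < (b+c)-a := by linarith
  have : 0 < (b+c)+a := by linarith
  have : 0 < a-(b-c) := by linarith
  have : 0 < a+(b-c) := by linarith
  positivity

noncomputable def rfun (q : P3) : ℝ :=
  (Real.exp q.2.1 * Real.exp q.2.1 + Real.exp q.2.2 * Real.exp q.2.2 -
    Real.exp q.1 * Real.exp q.1) * (2 * Real.exp q.2.1 * Real.exp q.2.2)⁻¹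

lemma ang1_eq (q : P3) : ang1 q = Real.arccos (rfun q) := by
  rw [ang1, eang, rfun]
  congr 1
  ring

lemma rfun_lt_one {p : P3} (h : Δ p) : rfun p < 1 := by
  obtain ⟨h1, h2, h3⟩ := h
  have ha := Real.exp_pos p.1
  have hb := Real.exp_pos p.2.1
  have hc := Real.exp_pos p.2.2
  rw [rfun, mul_inv_lt_iff₀ (by positivity)]
  nlinarith

lemma neg_one_lt_rfun {p : P3} (h : Δ p) : -1 < rfun p := by
  obtain ⟨h1, h2, h3⟩ := h
  have ha := Real.exp_pos p.1
  have hb := Real.exp_pos p.2.1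
  have hc := Real.exp_pos p.2.2
  rw [rfun]
  rw [← div_eq_mul_inv, lt_div_iff₀ (by positivity)]
  nlinarith

lemma ang1_mem {p : P3} (h : Δ p) : ang1 p ∈ Set.Ioo 0 π := by
  rw [ang1_eq]
  refine ⟨Real.arccos_pos.2 (rfun_lt_one h), ?_⟩
  rcases lt_or_eq_of_le (Real.arccos_le_pi (rfun p)) with h' | h'
  · exact h'
  · exact absurd (Real.arccos_eq_pi.1 h') (by linarith [neg_one_lt_rfun h])

lemma sin_ang1 {p : P3} (h : Δ p) :
    Real.sin (ang1 p) = Real.sqrt (Qp p) / (2 * Real.exp p.2.1 * Real.exp p.2.2) := by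
  rw [ang1_eq, Real.sin_arccos]
  have hb := Real.exp_pos p.2.1
  have hc := Real.exp_pos p.2.2
  have key : 1 - rfun p ^ 2 = Qp p / (2 * Real.exp p.2.1 * Real.exp p.2.2)^2 := by
    simp only [rfun, Qp, Qv]
    field_simp
    ring
  rw [key, Real.sqrt_div (Qp_pos h).le, Real.sqrt_sq (by positivity)]

/-- gradient of `ang1` (valid on the strict region). -/
noncomputable def grad1 (p : P3) : P3 :=
  (2*(Real.exp p.1)^2 / Real.sqrt (Qp p),
   -(((Real.exp p.1)^2+(Real.exp p.2.1)^2-(Real.exp p.2.2)^2) / Real.sqrt (Qp p)),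
   -(((Real.exp p.2.2)^2+(Real.exp p.1)^2-(Real.exp p.2.1)^2) / Real.sqrt (Qp p)))

lemma hasFDerivAt_ang1 {p : P3} (h : Δ p) : HasFDerivAt ang1 (dotCLM (grad1 p)) p := by
  have ha := Real.exp_pos p.1
  have hb := Real.exp_pos p.2.1
  have hc := Real.exp_pos p.2.2
  have hQ := Qp_pos h
  have hsq : (0:ℝ) < Real.sqrt (Qp p) := Real.sqrt_pos.2 hQ
  -- derivatives of the three coordinate exponentials
  have he1 : HasFDerivAt (fun q : P3 => Real.exp q.1) (Real.exp p.1 • pr1) p :=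
    (Real.hasDerivAt_exp p.1).comp_hasFDerivAt p pr1.hasFDerivAt
  have he2 : HasFDerivAt (fun q : P3 => Real.exp q.2.1) (Real.exp p.2.1 • pr2) p :=
    by have := (Real.hasDerivAt_exp p.2.1).comp_hasFDerivAt p pr2.hasFDerivAt; exact this
  have he3 : HasFDerivAt (fun q : P3 => Real.exp q.2.2) (Real.exp p.2.2 • pr3) p :=
    by have := (Real.hasDerivAt_exp p.2.2).comp_hasFDerivAt p pr3.hasFDerivAt; exact this
  have hN : HasFDerivAt (fun q : P3 => Real.exp q.2.1 * Real.exp q.2.1 +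
      Real.exp q.2.2 * Real.exp q.2.2 - Real.exp q.1 * Real.exp q.1) _ p :=
    (((he2.mul he2).add (he3.mul he3)).sub (he1.mul he1))
  have hD : HasFDerivAt (fun q : P3 => 2 * Real.exp q.2.1 * Real.exp q.2.2) _ p :=
    ((he2.const_mul 2).mul he3)
  have hinv := (hasDerivAt_inv
    (by positivity : 2 * Real.exp p.2.1 * Real.exp p.2.2 ≠ 0)).comp_hasFDerivAt p hD
  have hr : HasFDerivAt rfun _ p := hN.mul hinv
  have harc := (Real.hasDerivAt_arccos (x := rfun p)
      (by linarith [neg_one_lt_rfun h]) (by linarith [rfun_lt_one h])).comp_hasFDerivAt p hr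
  rw [show ang1 = Real.arccos ∘ rfun from funext ang1_eq]
  refine harc.congr_fderiv ?_
  have hkey : Real.sqrt (1 - rfun p ^ 2) =
      Real.sqrt (Qp p) / (2 * Real.exp p.2.1 * Real.exp p.2.2) := by
    have key : 1 - rfun p ^ 2 = Qp p / (2 * Real.exp p.2.1 * Real.exp p.2.2)^2 := by
      simp only [rfun, Qp, Qv]; field_simp; ring
    rw [key, Real.sqrt_div hQ.le, Real.sqrt_sq (by positivity)]
  apply ContinuousLinearMap.ext
  intro v
  obtain ⟨v1, v2, v3⟩ := v
  simp only [ContinuousLinearMap.smul_apply, ContinuousLinearMap.add_apply,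
    ContinuousLinearMap.sub_apply, ContinuousLinearMap.coe_smul', Pi.smul_apply,
    pr1_apply, pr2_apply, pr3_apply, dotCLM_apply, smul_eq_mul]
  rw [hkey]
  simp only [grad1, rfun]
  field_simp
  ring


lemma eang_broken_pi {a b c : ℝ} (hb : 0 < b) (hc : 0 < c) (h : b + c ≤ a) :
    eang a b c = π := by
  rw [eang]; apply Real.arccos_of_le_neg_one
  rw [div_le_iff₀ (by positivity)]; nlinarith

lemma eang_broken_z1 {a b c : ℝ} (hb : 0 < b) (hc : 0 < c) (ha : 0 < a) (h : b + c ≤ a) :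
    eang b c a = 0 := by
  rw [eang]; apply Real.arccos_of_one_le
  rw [le_div_iff₀ (by positivity)]
  nlinarith [mul_nonneg (by linarith : (0:ℝ) ≤ a - c - b) (by linarith : (0:ℝ) ≤ a - c + b)]

lemma eang_broken_z2 {a b c : ℝ} (hb : 0 < b) (hc : 0 < c) (ha : 0 < a) (h : b + c ≤ a) :
    eang c a b = 0 := by
  rw [eang]; apply Real.arccos_of_one_le
  rw [le_div_iff₀ (by positivity)]
  nlinarith [mul_nonneg (by linarith : (0:ℝ) ≤ a - b - c) (by linarith : (0:ℝ) ≤ a - b + c)]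

lemma quad_nonneg {a b c : ℝ} (ha : 0 < a) (hb : 0 < b) (hc : 0 < c)
    (h1 : a < b + c) (h2 : b < c + a) (h3 : c < a + b) (v1 v2 v3 : ℝ) :
    0 ≤ 2*a^2*v1^2 + 2*b^2*v2^2 + 2*c^2*v3^2 - 2*(a^2+b^2-c^2)*v1*v2
      - 2*(c^2+a^2-b^2)*v1*v3 - 2*(b^2+c^2-a^2)*v2*v3 := by
  have hY : 0 < 4*a^2*c^2 - (c^2+a^2-b^2)^2 := by
    have f1 : 0 < (b+a-c)*(b-a+c) := mul_pos (by linarith) (by linarith)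
    have f2 : 0 < (a+c-b)*(a+c+b) := mul_pos (by linarith) (by linarith)
    nlinarith [mul_pos f1 f2]
  nlinarith [sq_nonneg (2*a^2*(v1-v2) + (c^2+a^2-b^2)*(v2-v3)),
    mul_nonneg hY.le (sq_nonneg (v2-v3)), mul_pos ha ha, sq_nonneg (v1-v2), sq_nonneg (v2-v3)]

lemma finite_bad {s : Set ℝ} (hconv : Convex ℝ s) : (s \ interior s).Finite := by
  have hfin : ({sInf s, sSup s} : Set ℝ).Finite := (Set.finite_singleton _).insert _
  refine Set.Finite.subset hfin ?_
  intro x hx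
  obtain ⟨hx1, hx2⟩ := hx
  simp only [Set.mem_insert_iff, Set.mem_singleton_iff]
  rcases hconv.isPreconnected.mem_intervals with h|h|h|h|h|h|h|h|h|h <;> rw [h] at hx1 hx2
  · rw [interior_Icc] at hx2
    rcases eq_or_lt_of_le hx1.1 with he | hlt
    · exact Or.inl he.symm
    · exact Or.inr (le_antisymm hx1.2 (not_lt.1 fun hc => hx2 ⟨hlt, hc⟩))
  · rw [interior_Ico] at hx2
    rcases eq_or_lt_of_le hx1.1 with he | hlt
    · exact Or.inl he.symm
    · exact absurd ⟨hlt, hx1.2⟩ hx2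
  · rw [interior_Ioc] at hx2
    exact Or.inr (le_antisymm hx1.2 (not_lt.1 fun hc => hx2 ⟨hx1.1, hc⟩))
  · rw [interior_Ioo] at hx2; exact absurd hx1 hx2
  · rw [interior_Ici] at hx2
    exact Or.inl (le_antisymm (not_lt.1 fun hc => hx2 hc) hx1)
  · rw [interior_Ioi] at hx2; exact absurd hx1 hx2
  · rw [interior_Iic] at hx2
    exact Or.inr (le_antisymm hx1 (not_lt.1 fun hc => hx2 hc))
  · rw [interior_Iio] at hx2; exact absurd hx1 hx2
  · rw [interior_univ] at hx2; exact absurd hx1 hx2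
  · exact absurd hx1 (by simp)

lemma mono_except {S : Set ℝ} (hS : S.Finite) :
    ∀ (a b : ℝ), a ≤ b → ∀ φ : ℝ → ℝ, ContinuousOn φ (Set.Icc a b) →
      (∀ t ∈ Set.Ioo a b, t ∉ S → ∃ d, 0 ≤ d ∧ HasDerivAt φ d t) → φ a ≤ φ b := by
  refine Set.Finite.induction_on (motive := fun S _ => ∀ (a b : ℝ), a ≤ b → ∀ φ : ℝ → ℝ,
    ContinuousOn φ (Set.Icc a b) →
    (∀ t ∈ Set.Ioo a b, t ∉ S → ∃ d, 0 ≤ d ∧ HasDerivAt φ d t) → φ a ≤ φ b) S hS ?_ ?_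
  ·
    intro a b hab φ hc hd
    have hmono := monotoneOn_of_deriv_nonneg (convex_Icc a b) hc
      (fun x hx => by
        rw [interior_Icc] at hx
        exact ((hd x hx (Set.notMem_empty x)).choose_spec.2).differentiableAt.differentiableWithinAt)
      (fun x hx => by
        rw [interior_Icc] at hx
        obtain ⟨d, hd0, hdd⟩ := hd x hx (Set.notMem_empty x)
        rw [hdd.deriv]; exact hd0)
    exact hmono (Set.left_mem_Icc.2 hab) (Set.right_mem_Icc.2 hab) hab
  · intro x s hxs hsf IH
    intro a b hab φ hc hd
    by_cases hmem : x ∈ Set.Ioo a b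
    · have h1 := IH a x hmem.1.le φ (hc.mono (Set.Icc_subset_Icc le_rfl hmem.2.le))
        (fun t ht hts => hd t ⟨ht.1, ht.2.trans hmem.2⟩
          (by simp only [Set.mem_insert_iff, not_or]; exact ⟨ne_of_lt ht.2, hts⟩))
      have h2 := IH x b hmem.2.le φ (hc.mono (Set.Icc_subset_Icc hmem.1.le le_rfl))
        (fun t ht hts => hd t ⟨hmem.1.trans ht.1, ht.2⟩
          (by simp only [Set.mem_insert_iff, not_or]; exact ⟨(ne_of_lt ht.1).symm, hts⟩))
      linarith
    · exact IH a b hab φ hc (fun t ht hts => hd t ht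
        (by simp only [Set.mem_insert_iff, not_or]
            exact ⟨fun heq => hmem (heq ▸ ht), hts⟩))


-- ## Continuity
lemma continuous_rfun : Continuous rfun := by
  apply Continuous.mul
  · fun_prop
  · apply Continuous.inv₀
    · fun_prop
    · intro q; positivity

lemma continuous_ang1 : Continuous ang1 := by
  rw [show ang1 = Real.arccos ∘ rfun from funext ang1_eq]
  exact Real.continuous_arccos.comp continuous_rfun

lemma continuous_Gfun : Continuous Gfun :=
  continuous_ang1.prodMk ((continuous_ang1.comp cycCLM.continuous).prodMk
    (continuous_ang1.comp (cycCLM.continuous.comp cycCLM.continuous)))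

lemma ang1_mem_Icc (p : P3) : ang1 p ∈ Set.Icc 0 π := by
  rw [ang1_eq]
  exact ⟨Real.arccos_nonneg _, Real.arccos_le_pi _⟩

lemma continuous_fTri : Continuous fTri := by
  have h1 := continuous_ang1
  have h2 := continuous_ang1.comp cycCLM.continuous
  have h3 := continuous_ang1.comp (cycCLM.continuous.comp cycCLM.continuous)
  have l1 : Continuous fun p : P3 => Lob (ang1 p) :=
    continuousOn_Lob.comp_continuous h1 ang1_mem_Icc
  have l2 : Continuous fun p : P3 => Lob (ang1 (cycCLM p)) :=
    continuousOn_Lob.comp_continuous h2 (fun p => ang1_mem_Icc _)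
  have l3 : Continuous fun p : P3 => Lob (ang1 (cycCLM (cycCLM p))) :=
    continuousOn_Lob.comp_continuous h3 (fun p => ang1_mem_Icc _)
  rw [show fTri = fun p : P3 =>
    ang1 p * p.1 + ang1 (cycCLM p) * p.2.1 + ang1 (cycCLM (cycCLM p)) * p.2.2 +
    Lob (ang1 p) + Lob (ang1 (cycCLM p)) + Lob (ang1 (cycCLM (cycCLM p)))
    from funext fTri_eq]
  exact (((((h1.mul continuous_fst).add
    (h2.mul (continuous_fst.comp continuous_snd))).add
    (h3.mul (continuous_snd.comp continuous_snd))).add l1).add l2).add l3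

-- ## The broken (non-triangle) regions
def Br1 : Set P3 := {p | Real.exp p.2.1 + Real.exp p.2.2 ≤ Real.exp p.1}
def Br2 : Set P3 := {p | Real.exp p.2.2 + Real.exp p.1 ≤ Real.exp p.2.1}
def Br3 : Set P3 := {p | Real.exp p.1 + Real.exp p.2.1 ≤ Real.exp p.2.2}

lemma not_Δ_iff {p : P3} : ¬ Δ p ↔ p ∈ Br1 ∨ p ∈ Br2 ∨ p ∈ Br3 := by
  simp only [Δ, Br1, Br2, Br3, Set.mem_setOf_eq, not_and_or, not_lt]

lemma ang_on_Br1 {p : P3} (hp : p ∈ Br1) :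
    ang1 p = π ∧ ang1 (cycCLM p) = 0 ∧ ang1 (cycCLM (cycCLM p)) = 0 := by
  have ha := Real.exp_pos p.1
  have hb := Real.exp_pos p.2.1
  have hc := Real.exp_pos p.2.2
  exact ⟨eang_broken_pi hb hc hp, eang_broken_z1 hb hc ha hp, eang_broken_z2 hb hc ha hp⟩

lemma ang_on_Br2 {p : P3} (hp : p ∈ Br2) :
    ang1 p = 0 ∧ ang1 (cycCLM p) = π ∧ ang1 (cycCLM (cycCLM p)) = 0 := by
  have ha := Real.exp_pos p.1
  have hb := Real.exp_pos p.2.1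
  have hc := Real.exp_pos p.2.2
  exact ⟨eang_broken_z2 hc ha hb hp, eang_broken_pi hc ha hp, eang_broken_z1 hc ha hb hp⟩

lemma ang_on_Br3 {p : P3} (hp : p ∈ Br3) :
    ang1 p = 0 ∧ ang1 (cycCLM p) = 0 ∧ ang1 (cycCLM (cycCLM p)) = π := by
  have ha := Real.exp_pos p.1
  have hb := Real.exp_pos p.2.1
  have hc := Real.exp_pos p.2.2
  exact ⟨eang_broken_z1 ha hb hc hp, eang_broken_z2 ha hb hc hp, eang_broken_pi ha hb hp⟩

lemma Gfun_on_Br1 {p : P3} (hp : p ∈ Br1) : Gfun p = (π, 0, 0) := by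
  obtain ⟨e1, e2, e3⟩ := ang_on_Br1 hp
  simp only [Gfun]
  rw [e1, e2, e3]

lemma Gfun_on_Br2 {p : P3} (hp : p ∈ Br2) : Gfun p = (0, π, 0) := by
  obtain ⟨e1, e2, e3⟩ := ang_on_Br2 hp
  simp only [Gfun]
  rw [e1, e2, e3]

lemma Gfun_on_Br3 {p : P3} (hp : p ∈ Br3) : Gfun p = (0, 0, π) := by
  obtain ⟨e1, e2, e3⟩ := ang_on_Br3 hp
  simp only [Gfun]
  rw [e1, e2, e3]

lemma fTri_on_Br1 {p : P3} (hp : p ∈ Br1) : fTri p = π * p.1 + Lob π := by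
  obtain ⟨e1, e2, e3⟩ := ang_on_Br1 hp
  rw [fTri_eq, e1, e2, e3, Lob_zero]
  ring

lemma fTri_on_Br2 {p : P3} (hp : p ∈ Br2) : fTri p = π * p.2.1 + Lob π := by
  obtain ⟨e1, e2, e3⟩ := ang_on_Br2 hp
  rw [fTri_eq, e1, e2, e3, Lob_zero]
  ring

lemma fTri_on_Br3 {p : P3} (hp : p ∈ Br3) : fTri p = π * p.2.2 + Lob π := by
  obtain ⟨e1, e2, e3⟩ := ang_on_Br3 hp
  rw [fTri_eq, e1, e2, e3, Lob_zero]
  ring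

-- ## Strict-region total derivative of `fTri`
@[simp] lemma Qp_mk (x y z : ℝ) :
    Qp (x, y, z) = Qv (Real.exp x) (Real.exp y) (Real.exp z) := rfl

lemma klem {p : P3} (h : Δ p) :
    Real.log (2 * Real.sin (ang1 p)) =
      Real.log (Real.sqrt (Qp p)) - p.2.1 - p.2.2 := by
  have hb := Real.exp_pos p.2.1
  have hc := Real.exp_pos p.2.2
  have hQ := Qp_pos h
  have hsq : (0:ℝ) < Real.sqrt (Qp p) := Real.sqrt_pos.2 hQ
  rw [sin_ang1 h,
    show 2 * (Real.sqrt (Qp p) / (2 * Real.exp p.2.1 * Real.exp p.2.2)) =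
      Real.sqrt (Qp p) / (Real.exp p.2.1 * Real.exp p.2.2) by field_simp,
    Real.log_div hsq.ne' (by positivity),
    Real.log_mul (Real.exp_ne_zero _) (Real.exp_ne_zero _), Real.log_exp, Real.log_exp]
  ring

lemma hasFDerivAt_fTri_strict {p : P3} (h : Δ p) :
    HasFDerivAt fTri (dotCLM (Gfun p)) p := by
  have h2 := Δ_cyc h
  have h3 := Δ_cyc h2
  have hd1 := hasFDerivAt_ang1 h
  have hd2 : HasFDerivAt (fun q => ang1 (cycCLM q))
      ((dotCLM (grad1 (cycCLM p))).comp cycCLM) p :=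
    (hasFDerivAt_ang1 h2).comp p cycCLM.hasFDerivAt
  have hd3 : HasFDerivAt (fun q => ang1 (cycCLM (cycCLM q)))
      ((dotCLM (grad1 (cycCLM (cycCLM p)))).comp (cycCLM.comp cycCLM)) p :=
    by have := (hasFDerivAt_ang1 h3).comp p (cycCLM.comp cycCLM).hasFDerivAt; exact this
  have hL1 := (hasDerivAt_Lob (ang1_mem h)).comp_hasFDerivAt p hd1
  have hL2 := (hasDerivAt_Lob (ang1_mem h2)).comp_hasFDerivAt p hd2
  have hL3 := (hasDerivAt_Lob (ang1_mem h3)).comp_hasFDerivAt p hd3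
  have hx1 := hd1.mul (pr1.hasFDerivAt (x := p))
  have hx2 := hd2.mul (pr2.hasFDerivAt (x := p))
  have hx3 := hd3.mul (pr3.hasFDerivAt (x := p))
  have total := ((((hx1.add hx2).add hx3).add hL1).add hL2).add hL3
  rw [show fTri = fun q : P3 =>
      ang1 q * q.1 + ang1 (cycCLM q) * q.2.1 + ang1 (cycCLM (cycCLM q)) * q.2.2 +
      Lob (ang1 q) + Lob (ang1 (cycCLM q)) + Lob (ang1 (cycCLM (cycCLM q)))
      from funext fTri_eq]
  refine total.congr_fderiv ?_
  have hk1 := klem h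
  have hk2 := klem h2
  have hk3 := klem h3
  rw [Qp_cyc] at hk2
  rw [Qp_cyc, Qp_cyc] at hk3
  simp only [cycCLM_apply] at hk2 hk3
  apply ContinuousLinearMap.ext
  intro v
  obtain ⟨v1, v2, v3⟩ := v
  simp only [ContinuousLinearMap.add_apply, ContinuousLinearMap.smul_apply,
    ContinuousLinearMap.comp_apply, ContinuousLinearMap.coe_comp', Function.comp_apply,
    cycCLM_apply, pr1_apply, pr2_apply, pr3_apply, dotCLM_apply, smul_eq_mul, Gfun]
  rw [hk1, hk2, hk3]
  simp only [grad1, cycCLM_apply, Qp_mk, Qp]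
  rw [show Qv (Real.exp p.2.1) (Real.exp p.2.2) (Real.exp p.1) =
      Qv (Real.exp p.1) (Real.exp p.2.1) (Real.exp p.2.2) by simp only [Qv]; ring,
    show Qv (Real.exp p.2.2) (Real.exp p.1) (Real.exp p.2.1) =
      Qv (Real.exp p.1) (Real.exp p.2.1) (Real.exp p.2.2) by simp only [Qv]; ring]
  ring

-- ## Lines
noncomputable def lineP (p v : P3) (t : ℝ) : P3 := p + t • v

lemma lineP_zero (p v : P3) : lineP p v 0 = p := by simp [lineP]
lemma lineP_one (p v : P3) : lineP p v 1 = p + v := by simp [lineP]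

lemma continuous_lineP (p v : P3) : Continuous (lineP p v) := by
  unfold lineP; fun_prop

lemma hasDerivAt_lineP (p v : P3) (t : ℝ) : HasDerivAt (lineP p v) v t := by
  have h := ((hasDerivAt_id t).smul_const v).const_add p
  show HasDerivAt (fun s => p + s • v) v t
  simpa using h

lemma lineP_fst (p v : P3) (t : ℝ) : (lineP p v t).1 = p.1 + t * v.1 := rfl
lemma lineP_snd1 (p v : P3) (t : ℝ) : (lineP p v t).2.1 = p.2.1 + t * v.2.1 := rfl
lemma lineP_snd2 (p v : P3) (t : ℝ) : (lineP p v t).2.2 = p.2.2 + t * v.2.2 := rfl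

lemma lineP_dist (p v : P3) {t : ℝ} (h : t ∈ Set.Icc (0:ℝ) 1) :
    dist (lineP p v t) p ≤ ‖v‖ := by
  rw [lineP, dist_eq_norm, add_sub_cancel_left, norm_smul]
  have h1 : |t| ≤ 1 := abs_le.2 ⟨by linarith [h.1], h.2⟩
  calc ‖t‖ * ‖v‖ ≤ 1 * ‖v‖ := by
        apply mul_le_mul_of_nonneg_right _ (norm_nonneg v)
        rwa [Real.norm_eq_abs]
    _ = ‖v‖ := one_mul _

noncomputable def phi (p v : P3) (t : ℝ) : ℝ := dotCLM (Gfun (lineP p v t)) v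

lemma continuous_phi (p v : P3) : Continuous (phi p v) := by
  have hG := continuous_Gfun.comp (continuous_lineP p v)
  have : phi p v = fun t => (Gfun (lineP p v t)).1 * v.1 +
      (Gfun (lineP p v t)).2.1 * v.2.1 + (Gfun (lineP p v t)).2.2 * v.2.2 := by
    funext t; simp [phi]
  rw [this]
  exact ((hG.fst.mul continuous_const).add
    ((hG.snd.fst).mul continuous_const)).add ((hG.snd.snd).mul continuous_const)

-- ## Broken intervals along a line
def Tset (p v : P3) (B : Set P3) : Set ℝ := (lineP p v) ⁻¹' B

lemma convex_helper (A B C D : ℝ) :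
    Convex ℝ {t : ℝ | Real.exp (A + t * B) + Real.exp (C + t * D) ≤ 1} := by
  have mk : ∀ A B : ℝ, ConvexOn ℝ Set.univ (fun t : ℝ => Real.exp (A + t * B)) := by
    intro A B
    have h1 : (fun t : ℝ => Real.exp (A + t * B)) =
        Real.exp ∘ (AffineMap.lineMap A (A + B) : ℝ →ᵃ[ℝ] ℝ) := by
      funext t
      simp only [Function.comp_apply, AffineMap.lineMap_apply_module, smul_eq_mul]
      congr 1
      ring
    rw [h1]
    have := convexOn_exp.comp_affineMap (AffineMap.lineMap A (A + B) : ℝ →ᵃ[ℝ] ℝ)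
    simpa using this
  have hsum := (mk A B).add (mk C D)
  have := hsum.convex_le 1
  simpa using this

lemma Tset_Br1_eq (p v : P3) : Tset p v Br1 =
    {t : ℝ | Real.exp ((p.2.1 - p.1) + t * (v.2.1 - v.1)) +
      Real.exp ((p.2.2 - p.1) + t * (v.2.2 - v.1)) ≤ 1} := by
  ext t
  simp only [Tset, Set.mem_preimage, Br1, Set.mem_setOf_eq]
  rw [show (p.2.1 - p.1) + t * (v.2.1 - v.1) = (lineP p v t).2.1 - (lineP p v t).1 by
      rw [lineP_fst, lineP_snd1]; ring,
    show (p.2.2 - p.1) + t * (v.2.2 - v.1) = (lineP p v t).2.2 - (lineP p v t).1 by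
      rw [lineP_fst, lineP_snd2]; ring,
    Real.exp_sub, Real.exp_sub, ← add_div, div_le_one (Real.exp_pos _)]

lemma Tset_Br2_eq (p v : P3) : Tset p v Br2 =
    {t : ℝ | Real.exp ((p.2.2 - p.2.1) + t * (v.2.2 - v.2.1)) +
      Real.exp ((p.1 - p.2.1) + t * (v.1 - v.2.1)) ≤ 1} := by
  ext t
  simp only [Tset, Set.mem_preimage, Br2, Set.mem_setOf_eq]
  rw [show (p.2.2 - p.2.1) + t * (v.2.2 - v.2.1) = (lineP p v t).2.2 - (lineP p v t).2.1 by
      rw [lineP_snd1, lineP_snd2]; ring,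
    show (p.1 - p.2.1) + t * (v.1 - v.2.1) = (lineP p v t).1 - (lineP p v t).2.1 by
      rw [lineP_fst, lineP_snd1]; ring,
    Real.exp_sub, Real.exp_sub, ← add_div, div_le_one (Real.exp_pos _)]

lemma Tset_Br3_eq (p v : P3) : Tset p v Br3 =
    {t : ℝ | Real.exp ((p.1 - p.2.2) + t * (v.1 - v.2.2)) +
      Real.exp ((p.2.1 - p.2.2) + t * (v.2.1 - v.2.2)) ≤ 1} := by
  ext t
  simp only [Tset, Set.mem_preimage, Br3, Set.mem_setOf_eq]
  rw [show (p.1 - p.2.2) + t * (v.1 - v.2.2) = (lineP p v t).1 - (lineP p v t).2.2 by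
      rw [lineP_fst, lineP_snd2]; ring,
    show (p.2.1 - p.2.2) + t * (v.2.1 - v.2.2) = (lineP p v t).2.1 - (lineP p v t).2.2 by
      rw [lineP_snd1, lineP_snd2]; ring,
    Real.exp_sub, Real.exp_sub, ← add_div, div_le_one (Real.exp_pos _)]

lemma convex_Tset_Br1 (p v : P3) : Convex ℝ (Tset p v Br1) := by
  rw [Tset_Br1_eq]; exact convex_helper _ _ _ _
lemma convex_Tset_Br2 (p v : P3) : Convex ℝ (Tset p v Br2) := by
  rw [Tset_Br2_eq]; exact convex_helper _ _ _ _
lemma convex_Tset_Br3 (p v : P3) : Convex ℝ (Tset p v Br3) := by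
  rw [Tset_Br3_eq]; exact convex_helper _ _ _ _

lemma broken_block {p v : P3} {t : ℝ} {B : Set P3} {w : P3} (l : P3 →L[ℝ] ℝ)
    (hG : ∀ q ∈ B, Gfun q = w) (hf : ∀ q ∈ B, fTri q = π * l q + Lob π)
    (hwv : dotCLM w v = π * l v) (hmem : t ∈ interior (Tset p v B)) :
    HasDerivAt (fun s => fTri (lineP p v s)) (phi p v t) t ∧
    ∃ d, 0 ≤ d ∧ HasDerivAt (phi p v) d t := by
  have hnh : Tset p v B ∈ 𝓝 t := mem_interior_iff_mem_nhds.1 hmem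
  have htT' : t ∈ Tset p v B := mem_of_mem_nhds hnh
  have htT : lineP p v t ∈ B := htT'
  have hphit : phi p v t = π * l v := by rw [phi, hG _ htT, hwv]
  constructor
  · have hl : HasDerivAt (fun s => π * l (lineP p v s) + Lob π) (π * l v) t := by
      have h0 : HasDerivAt (fun s => l (lineP p v s)) (l v) t :=
        l.hasFDerivAt.comp_hasDerivAt t (hasDerivAt_lineP p v t)
      exact (h0.const_mul π).add_const (Lob π)
    rw [hphit]
    refine hl.congr_of_eventuallyEq ?_
    filter_upwards [hnh] with s hs
    exact hf _ hs
  · refine ⟨0, le_rfl, ?_⟩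
    refine (hasDerivAt_const t (π * l v)).congr_of_eventuallyEq ?_
    filter_upwards [hnh] with s hs
    rw [phi, hG _ hs, hwv]

lemma seg (p v : P3) : ∃ S : Set ℝ, S.Finite ∧ ∀ t, t ∉ S →
    HasDerivAt (fun s => fTri (lineP p v s)) (phi p v t) t ∧
    ∃ d, 0 ≤ d ∧ HasDerivAt (phi p v) d t := by
  refine ⟨(Tset p v Br1 \ interior (Tset p v Br1)) ∪
      ((Tset p v Br2 \ interior (Tset p v Br2)) ∪
       (Tset p v Br3 \ interior (Tset p v Br3))),
    (finite_bad (convex_Tset_Br1 p v)).union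
      ((finite_bad (convex_Tset_Br2 p v)).union (finite_bad (convex_Tset_Br3 p v))), ?_⟩
  intro t ht
  simp only [Set.mem_union, not_or, Set.mem_diff, not_and, not_not] at ht
  obtain ⟨ht1, ht2, ht3⟩ := ht
  by_cases hΔ : Δ (lineP p v t)
  · set q := lineP p v t with hq
    have hlineq := hasDerivAt_lineP p v t
    have hfd : HasDerivAt (fun s => fTri (lineP p v s)) (phi p v t) t :=
      by have := (hasFDerivAt_fTri_strict hΔ).comp_hasDerivAt t hlineq; exact this
    have hA1 : HasDerivAt (fun s => ang1 (lineP p v s)) (dotCLM (grad1 q) v) t :=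
      by have := (hasFDerivAt_ang1 hΔ).comp_hasDerivAt t hlineq; exact this
    have hA2 : HasDerivAt (fun s => ang1 (cycCLM (lineP p v s)))
        (dotCLM (grad1 (cycCLM q)) (cycCLM v)) t :=
      by have := (hasFDerivAt_ang1 (Δ_cyc hΔ)).comp_hasDerivAt t
          (cycCLM.hasFDerivAt.comp_hasDerivAt t hlineq); exact this
    have hA3 : HasDerivAt (fun s => ang1 (cycCLM (cycCLM (lineP p v s))))
        (dotCLM (grad1 (cycCLM (cycCLM q))) (cycCLM (cycCLM v))) t :=
      by have := (hasFDerivAt_ang1 (Δ_cyc (Δ_cyc hΔ))).comp_hasDerivAt t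
          ((cycCLM.comp cycCLM).hasFDerivAt.comp_hasDerivAt t hlineq); exact this
    have hφ : HasDerivAt (phi p v)
        (dotCLM (grad1 q) v * v.1 + dotCLM (grad1 (cycCLM q)) (cycCLM v) * v.2.1 +
         dotCLM (grad1 (cycCLM (cycCLM q))) (cycCLM (cycCLM v)) * v.2.2) t := by
      have hsum := ((hA1.mul_const v.1).add (hA2.mul_const v.2.1)).add (hA3.mul_const v.2.2)
      have hfeq : phi p v = fun s => ang1 (lineP p v s) * v.1 +
          ang1 (cycCLM (lineP p v s)) * v.2.1 +
          ang1 (cycCLM (cycCLM (lineP p v s))) * v.2.2 := by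
        funext s
        simp [phi, Gfun]
      rw [hfeq]
      exact hsum
    refine ⟨hfd, _, ?_, hφ⟩
    have ha := Real.exp_pos q.1
    have hb := Real.exp_pos q.2.1
    have hc := Real.exp_pos q.2.2
    have key : dotCLM (grad1 q) v * v.1 + dotCLM (grad1 (cycCLM q)) (cycCLM v) * v.2.1 +
        dotCLM (grad1 (cycCLM (cycCLM q))) (cycCLM (cycCLM v)) * v.2.2 =
        (2*(Real.exp q.1)^2*v.1^2 + 2*(Real.exp q.2.1)^2*v.2.1^2 +
          2*(Real.exp q.2.2)^2*v.2.2^2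
          - 2*((Real.exp q.1)^2+(Real.exp q.2.1)^2-(Real.exp q.2.2)^2)*v.1*v.2.1
          - 2*((Real.exp q.2.2)^2+(Real.exp q.1)^2-(Real.exp q.2.1)^2)*v.1*v.2.2
          - 2*((Real.exp q.2.1)^2+(Real.exp q.2.2)^2-(Real.exp q.1)^2)*v.2.1*v.2.2) /
        Real.sqrt (Qv (Real.exp q.1) (Real.exp q.2.1) (Real.exp q.2.2)) := by
      simp only [dotCLM_apply, grad1, cycCLM_apply, Qp_mk, Qp]
      rw [show Qv (Real.exp q.2.1) (Real.exp q.2.2) (Real.exp q.1) =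
          Qv (Real.exp q.1) (Real.exp q.2.1) (Real.exp q.2.2) by simp only [Qv]; ring,
        show Qv (Real.exp q.2.2) (Real.exp q.1) (Real.exp q.2.1) =
          Qv (Real.exp q.1) (Real.exp q.2.1) (Real.exp q.2.2) by simp only [Qv]; ring]
      ring
    rw [key]
    exact div_nonneg (quad_nonneg ha hb hc hΔ.1 hΔ.2.1 hΔ.2.2 v.1 v.2.1 v.2.2)
      (Real.sqrt_nonneg _)
  · rcases not_Δ_iff.1 hΔ with hB | hB | hB
    · exact broken_block pr1 (fun q hq => Gfun_on_Br1 hq) (fun q hq => fTri_on_Br1 hq)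
        (by simp) (ht1 hB)
    · exact broken_block pr2 (fun q hq => Gfun_on_Br2 hq) (fun q hq => fTri_on_Br2 hq)
        (by simp) (ht2 hB)
    · exact broken_block pr3 (fun q hq => Gfun_on_Br3 hq) (fun q hq => fTri_on_Br3 hq)
        (by simp) (ht3 hB)

-- ## `fTri` is differentiable everywhere with gradient `Gfun`
lemma dot_diff_bound {g h v : P3} {ε : ℝ} (hd : dist g h ≤ ε) :
    |dotCLM g v - dotCLM h v| ≤ 3 * ε * ‖v‖ := by
  have h1 : |g.1 - h.1| ≤ ε := by
    calc |g.1 - h.1| = dist g.1 h.1 := by rw [Real.dist_eq]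
      _ ≤ dist g h := by rw [Prod.dist_eq]; exact le_max_left _ _
      _ ≤ ε := hd
  have h2 : |g.2.1 - h.2.1| ≤ ε := by
    calc |g.2.1 - h.2.1| = dist g.2.1 h.2.1 := by rw [Real.dist_eq]
      _ ≤ dist g.2 h.2 := by rw [Prod.dist_eq]; exact le_max_left _ _
      _ ≤ dist g h := by rw [Prod.dist_eq]; exact le_max_right _ _
      _ ≤ ε := hd
  have h3 : |g.2.2 - h.2.2| ≤ ε := by
    calc |g.2.2 - h.2.2| = dist g.2.2 h.2.2 := by rw [Real.dist_eq]
      _ ≤ dist g.2 h.2 := by rw [Prod.dist_eq]; exact le_max_right _ _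
      _ ≤ dist g h := by rw [Prod.dist_eq]; exact le_max_right _ _
      _ ≤ ε := hd
  have hv1 : |v.1| ≤ ‖v‖ := by
    calc |v.1| = ‖v.1‖ := rfl
      _ ≤ ‖v‖ := norm_fst_le v
  have hv2 : |v.2.1| ≤ ‖v‖ := by
    calc |v.2.1| = ‖v.2.1‖ := rfl
      _ ≤ ‖v.2‖ := norm_fst_le v.2
      _ ≤ ‖v‖ := norm_snd_le v
  have hv3 : |v.2.2| ≤ ‖v‖ := by
    calc |v.2.2| = ‖v.2.2‖ := rfl
      _ ≤ ‖v.2‖ := norm_snd_le v.2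
      _ ≤ ‖v‖ := norm_snd_le v
  have e : dotCLM g v - dotCLM h v =
      (g.1 - h.1) * v.1 + (g.2.1 - h.2.1) * v.2.1 + (g.2.2 - h.2.2) * v.2.2 := by
    simp only [dotCLM_apply]; ring
  rw [e]
  have b1 : |(g.1 - h.1) * v.1| ≤ ε * ‖v‖ := by
    rw [abs_mul]
    exact mul_le_mul h1 hv1 (abs_nonneg _) ((abs_nonneg _).trans h1)
  have b2 : |(g.2.1 - h.2.1) * v.2.1| ≤ ε * ‖v‖ := by
    rw [abs_mul]
    exact mul_le_mul h2 hv2 (abs_nonneg _) ((abs_nonneg _).trans h2)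
  have b3 : |(g.2.2 - h.2.2) * v.2.2| ≤ ε * ‖v‖ := by
    rw [abs_mul]
    exact mul_le_mul h3 hv3 (abs_nonneg _) ((abs_nonneg _).trans h3)
  calc |(g.1 - h.1) * v.1 + (g.2.1 - h.2.1) * v.2.1 + (g.2.2 - h.2.2) * v.2.2|
      ≤ |(g.1 - h.1) * v.1 + (g.2.1 - h.2.1) * v.2.1| + |(g.2.2 - h.2.2) * v.2.2| :=
        abs_add_le _ _
    _ ≤ |(g.1 - h.1) * v.1| + |(g.2.1 - h.2.1) * v.2.1| + |(g.2.2 - h.2.2) * v.2.2| := by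
        linarith [abs_add_le ((g.1 - h.1) * v.1) ((g.2.1 - h.2.1) * v.2.1)]
    _ ≤ 3 * ε * ‖v‖ := by linarith

theorem hasFDerivAt_fTri (p : P3) : HasFDerivAt fTri (dotCLM (Gfun p)) p := by
  rw [hasFDerivAt_iff_isLittleO_nhds_zero, Asymptotics.isLittleO_iff]
  intro ε hε
  have hcont : ContinuousAt Gfun p := continuous_Gfun.continuousAt
  obtain ⟨δ, hδ0, hδ⟩ := Metric.continuousAt_iff.1 hcont (ε/4) (by positivity)
  refine Metric.eventually_nhds_iff.2 ⟨δ, hδ0, ?_⟩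
  intro v hv
  have hvn : ‖v‖ < δ := by rwa [dist_zero_right] at hv
  obtain ⟨S, hSfin, hS⟩ := seg p v
  have hclose : ∀ t ∈ Set.Icc (0:ℝ) 1, |phi p v t - dotCLM (Gfun p) v| ≤ 3 * (ε/4) * ‖v‖ := by
    intro t ht
    have hdist : dist (lineP p v t) p < δ := lt_of_le_of_lt (lineP_dist p v ht) hvn
    have := hδ hdist
    exact dot_diff_bound (le_of_lt this)
  have hcf : Continuous fun s => fTri (lineP p v s) :=
    continuous_fTri.comp (continuous_lineP p v)
  have hup : fTri (p + v) - fTri p - dotCLM (Gfun p) v ≤ 3 * (ε/4) * ‖v‖ := by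
    have := mono_except hSfin 0 1 zero_le_one
      (fun t => 3 * (ε/4) * ‖v‖ * t - (fTri (lineP p v t) - dotCLM (Gfun p) v * t))
      (by apply Continuous.continuousOn; fun_prop)
      (fun t ht hts => by
        refine ⟨3 * (ε/4) * ‖v‖ - (phi p v t - dotCLM (Gfun p) v), ?_, ?_⟩
        · have := hclose t ⟨ht.1.le, ht.2.le⟩
          have := abs_le.1 this
          linarith [this.2]
        · have hder := (hS t hts).1
          have h1 : HasDerivAt (fun t : ℝ => 3 * (ε/4) * ‖v‖ * t) (3 * (ε/4) * ‖v‖) t := by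
            simpa using (hasDerivAt_id t).const_mul (3 * (ε/4) * ‖v‖)
          have h2 : HasDerivAt (fun t : ℝ => dotCLM (Gfun p) v * t) (dotCLM (Gfun p) v) t := by
            simpa using (hasDerivAt_id t).const_mul (dotCLM (Gfun p) v)
          exact h1.sub (hder.sub h2))
    simp only [lineP_zero, lineP_one, mul_zero, mul_one, sub_zero] at this
    linarith
  have hlo : -(3 * (ε/4) * ‖v‖) ≤ fTri (p + v) - fTri p - dotCLM (Gfun p) v := by
    have := mono_except hSfin 0 1 zero_le_one
      (fun t => 3 * (ε/4) * ‖v‖ * t + (fTri (lineP p v t) - dotCLM (Gfun p) v * t))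
      (by apply Continuous.continuousOn; fun_prop)
      (fun t ht hts => by
        refine ⟨3 * (ε/4) * ‖v‖ + (phi p v t - dotCLM (Gfun p) v), ?_, ?_⟩
        · have := hclose t ⟨ht.1.le, ht.2.le⟩
          have := abs_le.1 this
          linarith [this.1]
        · have hder := (hS t hts).1
          have h1 : HasDerivAt (fun t : ℝ => 3 * (ε/4) * ‖v‖ * t) (3 * (ε/4) * ‖v‖) t := by
            simpa using (hasDerivAt_id t).const_mul (3 * (ε/4) * ‖v‖)
          have h2 : HasDerivAt (fun t : ℝ => dotCLM (Gfun p) v * t) (dotCLM (Gfun p) v) t := by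
            simpa using (hasDerivAt_id t).const_mul (dotCLM (Gfun p) v)
          exact h1.add (hder.sub h2))
    simp only [lineP_zero, lineP_one, mul_zero, mul_one, sub_zero] at this
    linarith
  have : |fTri (p + v) - fTri p - dotCLM (Gfun p) v| ≤ 3 * (ε/4) * ‖v‖ :=
    abs_le.2 ⟨hlo, hup⟩
  calc ‖fTri (p + v) - fTri p - dotCLM (Gfun p) v‖
      = |fTri (p + v) - fTri p - dotCLM (Gfun p) v| := rfl
    _ ≤ 3 * (ε/4) * ‖v‖ := this
    _ ≤ ε * ‖v‖ := by nlinarith [norm_nonneg v]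

lemma monotone_phi (p v : P3) : Monotone (phi p v) := by
  intro a b hab
  obtain ⟨S, hSfin, hS⟩ := seg p v
  exact mono_except hSfin a b hab (phi p v) (continuous_phi p v).continuousOn
    (fun t _ hts => (hS t hts).2)

lemma support_le (p q : P3) : fTri p + dotCLM (Gfun p) (q - p) ≤ fTri q := by
  obtain ⟨S, hSfin, hS⟩ := seg p (q - p)
  set v := q - p with hv
  have h0 : phi p v 0 = dotCLM (Gfun p) v := by rw [phi, lineP_zero]
  have key := mono_except hSfin 0 1 zero_le_one
    (fun t => fTri (lineP p v t) - dotCLM (Gfun p) v * t)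
    (by
      apply Continuous.continuousOn
      exact (continuous_fTri.comp (continuous_lineP p v)).sub (by fun_prop))
    (fun t ht hts => by
      refine ⟨phi p v t - dotCLM (Gfun p) v, ?_, ?_⟩
      · have := monotone_phi p v (le_of_lt ht.1)
        rw [h0] at this
        linarith
      · have h2 : HasDerivAt (fun t : ℝ => dotCLM (Gfun p) v * t) (dotCLM (Gfun p) v) t := by
          simpa using (hasDerivAt_id t).const_mul (dotCLM (Gfun p) v)
        exact (hS t hts).1.sub h2)
  simp only [lineP_zero, lineP_one, mul_zero, mul_one, sub_zero] at key
  have hpq : p + v = q := by rw [hv]; abel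
  rw [hpq] at key
  linarith

theorem convexOn_fTri : ConvexOn ℝ Set.univ fTri := by
  refine ⟨convex_univ, fun x _ y _ a b ha hb hab => ?_⟩
  set z := a • x + b • y with hz
  have h1 := support_le z x
  have h2 := support_le z y
  have hzero : a • (x - z) + b • (y - z) = 0 := by
    have : a • (x - z) + b • (y - z) = (1 - (a + b)) • z := by
      rw [smul_sub, smul_sub, hz]
      rw [sub_smul, one_smul, add_smul]
      abel
    rw [this, hab, sub_self, zero_smul]
  have hdot : a * dotCLM (Gfun z) (x - z) + b * dotCLM (Gfun z) (y - z) = 0 := by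
    have := congrArg (dotCLM (Gfun z)) hzero
    rw [ContinuousLinearMap.map_add, ContinuousLinearMap.map_smul,
      ContinuousLinearMap.map_smul, ContinuousLinearMap.map_zero] at this
    simpa [smul_eq_mul] using this
  have hm1 := mul_le_mul_of_nonneg_left h1 ha
  have hm2 := mul_le_mul_of_nonneg_left h2 hb
  have hfz : a * fTri z + b * fTri z = fTri z := by
    rw [← add_mul, hab, one_mul]
  simp only [smul_eq_mul]
  nlinarith [hm1, hm2]

lemma continuous_dotCLM : Continuous dotCLM := by
  unfold dotCLM
  exact ((continuous_fst.smul continuous_const).add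
    ((continuous_fst.comp continuous_snd).smul continuous_const)).add
    ((continuous_snd.comp continuous_snd).smul continuous_const)

theorem contDiff_fTri : ContDiff ℝ 1 fTri := by
  rw [contDiff_one_iff_fderiv]
  refine ⟨fun p => (hasFDerivAt_fTri p).differentiableAt, ?_⟩
  have : (fderiv ℝ fTri) = fun p => dotCLM (Gfun p) :=
    funext fun p => (hasFDerivAt_fTri p).fderiv
  rw [this]
  exact continuous_dotCLM.comp continuous_Gfun

end BPS

/-- The function `E` is convex and continuously differentiable on all of `ℝ^V`. -/
theorem Efun_convex_contDiff {V T : Type*} [Fintype V] [Fintype T]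
    (tv : T → V × V × V)
    (hdist : ∀ t : T, (tv t).1 ≠ (tv t).2.1 ∧ (tv t).2.1 ≠ (tv t).2.2 ∧
      (tv t).2.2 ≠ (tv t).1)
    (lam : V → V → ℝ) (hsym : ∀ i j, lam i j = lam j i) (Θ : V → ℝ) :
    ConvexOn ℝ Set.univ (Efun tv lam Θ) ∧ ContDiff ℝ 1 (Efun tv lam Θ) := by
  classical
  constructor
  · refine ⟨convex_univ, fun x _ y _ a b ha hb hab => ?_⟩
    have hlam : ∀ i j : V, lamT lam (a • x + b • y) i j
        = a * lamT lam x i j + b * lamT lam y i j := by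
      intro i j
      simp only [lamT, Pi.add_apply, Pi.smul_apply, smul_eq_mul]
      linear_combination (lam i j) * hab.symm
    have hterm : ∀ t : T,
        2 * fTri (lamT lam (a • x + b • y) (tv t).1 (tv t).2.1 / 2,
                  lamT lam (a • x + b • y) (tv t).2.1 (tv t).2.2 / 2,
                  lamT lam (a • x + b • y) (tv t).2.2 (tv t).1 / 2)
          - (π/2) * (lamT lam (a • x + b • y) (tv t).1 (tv t).2.1
                   + lamT lam (a • x + b • y) (tv t).2.1 (tv t).2.2
                   + lamT lam (a • x + b • y) (tv t).2.2 (tv t).1)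
        ≤ a * (2 * fTri (lamT lam x (tv t).1 (tv t).2.1 / 2,
                  lamT lam x (tv t).2.1 (tv t).2.2 / 2,
                  lamT lam x (tv t).2.2 (tv t).1 / 2)
          - (π/2) * (lamT lam x (tv t).1 (tv t).2.1
                   + lamT lam x (tv t).2.1 (tv t).2.2
                   + lamT lam x (tv t).2.2 (tv t).1))
        + b * (2 * fTri (lamT lam y (tv t).1 (tv t).2.1 / 2,
                  lamT lam y (tv t).2.1 (tv t).2.2 / 2,
                  lamT lam y (tv t).2.2 (tv t).1 / 2)
          - (π/2) * (lamT lam y (tv t).1 (tv t).2.1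
                   + lamT lam y (tv t).2.1 (tv t).2.2
                   + lamT lam y (tv t).2.2 (tv t).1)) := by
      intro t
      set i := (tv t).1
      set j := (tv t).2.1
      set k := (tv t).2.2
      have harg : (lamT lam (a • x + b • y) i j / 2,
                   lamT lam (a • x + b • y) j k / 2,
                   lamT lam (a • x + b • y) k i / 2)
          = a • ((lamT lam x i j / 2, lamT lam x j k / 2, lamT lam x k i / 2) : BPS.P3)
          + b • ((lamT lam y i j / 2, lamT lam y j k / 2, lamT lam y k i / 2) : BPS.P3) := by
        have e1 := hlam i j
        have e2 := hlam j k
        have e3 := hlam k i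
        refine Prod.ext ?_ (Prod.ext ?_ ?_)
        · simp only [Prod.fst_add, Prod.smul_fst, smul_eq_mul]
          rw [e1]; ring
        · simp only [Prod.snd_add, Prod.smul_snd, Prod.fst_add, Prod.smul_fst, smul_eq_mul]
          rw [e2]; ring
        · simp only [Prod.snd_add, Prod.smul_snd, smul_eq_mul]
          rw [e3]; ring
      have hf := BPS.convexOn_fTri.2 (Set.mem_univ
          ((lamT lam x i j / 2, lamT lam x j k / 2, lamT lam x k i / 2) : BPS.P3))
        (Set.mem_univ ((lamT lam y i j / 2, lamT lam y j k / 2, lamT lam y k i / 2) : BPS.P3))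
        ha hb hab
      rw [← harg] at hf
      simp only [smul_eq_mul] at hf
      rw [hlam i j, hlam j k, hlam k i] at hf ⊢
      nlinarith [hf]
    have hsum := Finset.sum_le_sum (fun t (_ : t ∈ Finset.univ) => hterm t)
    have hθ : ∑ i : V, Θ i * (a • x + b • y) i
        = a * ∑ i : V, Θ i * x i + b * ∑ i : V, Θ i * y i := by
      rw [Finset.mul_sum, Finset.mul_sum, ← Finset.sum_add_distrib]
      apply Finset.sum_congr rfl
      intro i _
      simp only [Pi.add_apply, Pi.smul_apply, smul_eq_mul]
      ring
    simp only [Efun, smul_eq_mul]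
    rw [Finset.sum_add_distrib] at hsum
    calc (∑ t : T, _) + ∑ i : V, Θ i * (a • x + b • y) i
        ≤ (∑ t : T, a * _ + ∑ t : T, b * _) + ∑ i : V, Θ i * (a • x + b • y) i := by
          exact add_le_add_left hsum _
      _ = _ := by
          rw [hθ, ← Finset.mul_sum, ← Finset.mul_sum]
          ring
  · have hproj : ∀ i : V, ContDiff ℝ 1 (fun u : V → ℝ => u i) := fun i =>
      (ContinuousLinearMap.proj (R := ℝ) (φ := fun _ : V => ℝ) i).contDiff
    have hlamT : ∀ i j : V, ContDiff ℝ 1 (fun u : V → ℝ => lamT lam u i j) := by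
      intro i j
      have : (fun u : V → ℝ => lamT lam u i j) = fun u => lam i j + u i + u j := rfl
      rw [this]
      exact (contDiff_const.add (hproj i)).add (hproj j)
    have harg : ∀ t : T, ContDiff ℝ 1 (fun u : V → ℝ =>
        ((lamT lam u (tv t).1 (tv t).2.1 / 2,
          lamT lam u (tv t).2.1 (tv t).2.2 / 2,
          lamT lam u (tv t).2.2 (tv t).1 / 2) : BPS.P3)) := fun t =>
      ((hlamT _ _).div_const 2).prodMk (((hlamT _ _).div_const 2).prodMk ((hlamT _ _).div_const 2))
    have h1 : ContDiff ℝ 1 (fun u : V → ℝ => ∑ t : T,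
        (2 * fTri (lamT lam u (tv t).1 (tv t).2.1 / 2,
                   lamT lam u (tv t).2.1 (tv t).2.2 / 2,
                   lamT lam u (tv t).2.2 (tv t).1 / 2)
          - (π/2) * (lamT lam u (tv t).1 (tv t).2.1
                   + lamT lam u (tv t).2.1 (tv t).2.2
                   + lamT lam u (tv t).2.2 (tv t).1))) := by
      apply ContDiff.sum
      intro t _
      exact (contDiff_const.mul (BPS.contDiff_fTri.comp (harg t))).sub
        (contDiff_const.mul (((hlamT _ _).add (hlamT _ _)).add (hlamT _ _)))
    have h2 : ContDiff ℝ 1 (fun u : V → ℝ => ∑ i : V, Θ i * u i) := by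
      apply ContDiff.sum
      intro i _
      exact contDiff_const.mul (hproj i)
    exact h1.add h2
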